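/- arXiv:2501.17651 — 3 statements merged into one kernel-verified Lean document; each statement's English description precedes it below -/
import Mathlib

section
/- Let (X,d,μ) be a metric measure space with a doubling measure, let 1 < p < ∞ and let w be a weight in X. Assume there is a constant C₁ such that ∫_X (M*f)^p w dμ ≤ C₁ ∫_X f^p w dμ for every nonnegative f ∈ L^∞(X) with bounded support, where M* is the noncentered Hardy–Littlewood maximal function. Then w belongs to the Muckenhoupt class A_p and [w]_{A_p} ≤ C₁. -/
open MeasureTheory Metric ENNReal

noncomputable section

/-- The standing assumptions on the metric measure space `(X, d, μ)`: `X` has at least two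
points, `μ` is a positive complete Borel measure which is positive and finite on all open
balls, and `μ` is doubling with doubling constant `c > 1`. -/
def GoodSpace (X : Type*) [MetricSpace X] [MeasurableSpace X] (μ : Measure X) (c : ℝ) : Prop :=
  Nontrivial X ∧ μ.IsComplete ∧
    (∀ (x : X) (r : ℝ), 0 < r → 0 < μ (ball x r) ∧ μ (ball x r) < ⊤) ∧
    1 < c ∧ ∀ (x : X) (r : ℝ), 0 < r → μ (ball x (2 * r)) ≤ ENNReal.ofReal c * μ (ball x r)

/-- `w` is a weight in `X`: measurable, positive `μ`-a.e., and integrable on all balls. -/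
def IsWeight {X : Type*} [MetricSpace X] [MeasurableSpace X] (μ : Measure X) (w : X → ℝ) :
    Prop :=
  Measurable w ∧ (∀ᵐ x ∂μ, 0 < w x) ∧
    ∀ (x : X) (r : ℝ), 0 < r → IntegrableOn w (ball x r) μ

/-- The weighted measure `w(E) = ∫_E w dμ` of a set `E`. -/
def wMeas {X : Type*} [MetricSpace X] [MeasurableSpace X] (μ : Measure X) (w : X → ℝ)
    (E : Set X) : ℝ≥0∞ :=
  ∫⁻ y in E, ENNReal.ofReal (w y) ∂μ

/-- The Muckenhoupt `A_p` condition with constant `C`: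
`(⨍_B w dμ) * (⨍_B w^(1/(1-p)) dμ)^(p-1) ≤ C` for every ball `B`. -/
def ApWith {X : Type*} [MetricSpace X] [MeasurableSpace X] (μ : Measure X) (w : X → ℝ)
    (p C : ℝ) : Prop :=
  ∀ (x : X) (r : ℝ), 0 < r →
    (wMeas μ w (ball x r) / μ (ball x r)) *
      ((∫⁻ y in ball x r, ENNReal.ofReal (w y) ^ (1 / (1 - p)) ∂μ) / μ (ball x r)) ^ (p - 1)
      ≤ ENNReal.ofReal C

/-- Membership in the Muckenhoupt class `A_p`. -/
def MemAp {X : Type*} [MetricSpace X] [MeasurableSpace X] (μ : Measure X) (w : X → ℝ)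
    (p : ℝ) : Prop :=
  ∃ C : ℝ, ApWith μ w p C

/-- The smallest constant in the `A_p` condition, denoted `[w]_{A_p}`. -/
def ApConst {X : Type*} [MetricSpace X] [MeasurableSpace X] (μ : Measure X) (w : X → ℝ)
    (p : ℝ) : ℝ :=
  sInf {C : ℝ | ApWith μ w p C}

/-- The noncentered maximal function of an `ℝ≥0∞`-valued function. -/
def MncE {X : Type*} [MetricSpace X] [MeasurableSpace X] (μ : Measure X) (g : X → ℝ≥0∞)
    (x : X) : ℝ≥0∞ :=
  ⨆ (z : X) (r : ℝ) (_ : x ∈ ball z r), (∫⁻ y in ball z r, g y ∂μ) / μ (ball z r)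

/-- The noncentered Hardy–Littlewood maximal function `M* f`. -/
def Mnc {X : Type*} [MetricSpace X] [MeasurableSpace X] (μ : Measure X) (f : X → ℝ)
    (x : X) : ℝ≥0∞ :=
  MncE μ (fun y => ENNReal.ofReal |f y|) x

/-- The weighted noncentered maximal function `M^{*,v} g` (for `ℝ≥0∞`-valued `g`). -/
def MncWE {X : Type*} [MetricSpace X] [MeasurableSpace X] (μ : Measure X) (v : X → ℝ)
    (g : X → ℝ≥0∞) (x : X) : ℝ≥0∞ :=
  ⨆ (z : X) (r : ℝ) (_ : x ∈ ball z r),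
    (∫⁻ y in ball z r, g y * ENNReal.ofReal (v y) ∂μ) / wMeas μ v (ball z r)

/-- `f` has bounded support: `{x : f x ≠ 0}` is contained in some ball. -/
def BoundedSupport {X : Type*} [MetricSpace X] (f : X → ℝ) : Prop :=
  ∃ (z : X) (r : ℝ), ∀ x, f x ≠ 0 → x ∈ ball z r

/-- Membership in the weighted space `L^p(w dμ)`. -/
def MemLpW {X : Type*} [MetricSpace X] [MeasurableSpace X] (μ : Measure X) (w : X → ℝ)
    (p : ℝ) (f : X → ℝ) : Prop :=
  Measurable f ∧ ∫⁻ x, ENNReal.ofReal |f x| ^ p * ENNReal.ofReal (w x) ∂μ < ⊤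

/-- `w` is a doubling weight with constant `cw`:
`0 < w(B(x,2r)) ≤ cw · w(B(x,r)) < ∞` for all balls. -/
def DoublingWeight {X : Type*} [MetricSpace X] [MeasurableSpace X] (μ : Measure X)
    (w : X → ℝ) (cw : ℝ) : Prop :=
  ∀ (x : X) (r : ℝ), 0 < r →
    0 < wMeas μ w (ball x (2 * r)) ∧
      wMeas μ w (ball x (2 * r)) ≤ ENNReal.ofReal cw * wMeas μ w (ball x r) ∧
      wMeas μ w (ball x r) < ⊤

open scoped NNReal

/-! Test the maximal inequality on `f = min(σ, n) · 1_B` for a ball `B`, where `σ = w^{1/(1-p)}`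
is the dual weight. On `B` we have `M* f ≥ ⨍_B f`, while `σ^{p-1} w = 1` gives `f^p w ≤ f`; hence
`(⨍_B f)^p w(B) ≤ C₁ ∫_B f`, that is `(w(B)/μ(B)) (⨍_B f)^{p-1} ≤ C₁` once the finite factor
`∫_B f` is cancelled. Monotone convergence in `n` yields the `A_p` bound. -/

namespace ENNReal

lemma rpow_sub_one_mul_self {x : ℝ≥0∞} (hx0 : x ≠ 0) (hx : x ≠ ⊤) (p : ℝ) :
    x ^ (p - 1) * x = x ^ p := by
  conv_rhs => rw [← sub_add_cancel p 1, rpow_add _ _ hx0 hx, rpow_one]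

lemma div_mul_rpow_sub_one_le {p : ℝ} (hp : 1 < p) {I V W C : ℝ≥0∞} (hI : I ≠ ⊤)
    (hV0 : V ≠ 0) (hV : V ≠ ⊤) (h : (I / V) ^ p * W ≤ C * I) :
    W / V * (I / V) ^ (p - 1) ≤ C := by
  set A := I / V
  have hA_top : A ≠ ⊤ := div_ne_top hI hV0
  rcases eq_or_ne A 0 with hA0 | hA0
  · simp [hA0, zero_rpow_of_pos (sub_pos.2 hp)]
  have hI_eq : I = A * V := (ENNReal.div_mul_cancel hV0 hV).symm
  rw [← rpow_sub_one_mul_self hA0 hA_top, hI_eq] at h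
  have h' : A ^ (p - 1) * W * A ≤ C * V * A := by
    calc A ^ (p - 1) * W * A = A ^ (p - 1) * A * W := by ring
      _ ≤ C * (A * V) := h
      _ = C * V * A := by ring
  rw [mul_comm, ← mul_div_assoc]
  exact div_le_of_le_mul ((ENNReal.mul_le_mul_iff_left hA0 hA_top).1 h')

lemma rpow_mul_le_of_le_rpow_one_div_one_sub {p : ℝ} (hp : 1 < p) {a m : ℝ≥0∞} (ha0 : a ≠ 0)
    (ha : a ≠ ⊤) (hm : m ≤ a ^ (1 / (1 - p))) : m ^ p * a ≤ m := by
  rcases eq_or_ne m 0 with hm0 | hm0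
  · simp [hm0, zero_rpow_of_pos (zero_lt_one.trans hp)]
  have hm_top : m ≠ ⊤ := ne_top_of_le_ne_top (rpow_ne_top_of_ne_zero ha0 ha) hm
  have hm_rpow : m ^ (p - 1) ≤ a⁻¹ := calc
    m ^ (p - 1) ≤ (a ^ (1 / (1 - p))) ^ (p - 1) := rpow_le_rpow hm (sub_pos.2 hp).le
    _ = a⁻¹ := by
      rw [← rpow_mul, ← rpow_neg_one]
      congr 1
      rw [div_mul_eq_mul_div, one_mul, div_eq_iff (by linarith)]
      ring
  calc m ^ p * a = m ^ (p - 1) * a * m := by rw [← rpow_sub_one_mul_self hm0 hm_top]; ring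
    _ ≤ a⁻¹ * a * m := by gcongr
    _ = m := by rw [ENNReal.inv_mul_cancel ha0 ha, one_mul]

end ENNReal

section DualWeight

variable {X : Type*}

/-- Equals `⊤` where `w ≤ 0` when `p > 1`, since `ENNReal.ofReal` truncates to `0`. -/
def dualWeight (w : X → ℝ) (p : ℝ) (y : X) : ℝ≥0∞ :=
  ENNReal.ofReal (w y) ^ (1 / (1 - p))

lemma measurable_dualWeight [MeasurableSpace X] {w : X → ℝ} (hw : Measurable w) (p : ℝ) :
    Measurable (dualWeight w p) :=
  (ENNReal.continuous_rpow_const.measurable).comp hw.ennreal_ofReal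

lemma dualWeight_pos {p : ℝ} (hp : 1 < p) (w : X → ℝ) (y : X) : 0 < dualWeight w p y := by
  rcases eq_or_ne (ENNReal.ofReal (w y)) 0 with h | h
  · rw [dualWeight, h, ENNReal.zero_rpow_of_neg (div_neg_of_pos_of_neg one_pos (by linarith))]
    exact ENNReal.zero_lt_top
  · exact ENNReal.rpow_pos (pos_iff_ne_zero.2 h) ENNReal.ofReal_ne_top

end DualWeight

lemma setLIntegral_pos_of_ae_pos {α : Type*} [MeasurableSpace α] {μ : Measure α}
    {f : α → ℝ≥0∞} (hf : Measurable f) (h : ∀ᵐ x ∂μ, 0 < f x) {s : Set α} (hs : μ s ≠ 0) :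
    0 < ∫⁻ x in s, f x ∂μ := by
  rw [setLIntegral_pos_iff hf,
    Measure.measure_inter_eq_of_ae (t := Function.support f) (h.mono fun x hx => hx.ne')]
  exact pos_iff_ne_zero.2 hs

section MaximalInequality

variable {X : Type*} [MetricSpace X] [MeasurableSpace X]

lemma lintegral_ball_div_le_MncE (μ : Measure X) (g : X → ℝ≥0∞) {z y : X} {r : ℝ}
    (hy : y ∈ ball z r) : (∫⁻ x in ball z r, g x ∂μ) / μ (ball z r) ≤ MncE μ g y :=
  le_iSup_of_le z (le_iSup_of_le r (le_iSup_of_le hy le_rfl))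

def WeightedMaximalInequality (μ : Measure X) (w : X → ℝ) (p C : ℝ) : Prop :=
  ∀ f : X → ℝ, MemLp f ⊤ μ → (∀ x, 0 ≤ f x) → BoundedSupport f →
    ∫⁻ x, Mnc μ f x ^ p * ENNReal.ofReal (w x) ∂μ ≤
      ENNReal.ofReal C * ∫⁻ x, ENNReal.ofReal (f x) ^ p * ENNReal.ofReal (w x) ∂μ

namespace WeightedMaximalInequality

variable [OpensMeasurableSpace X] {μ : Measure X} {w : X → ℝ} {p C : ℝ}

lemma rpow_average_mul_wMeas_le (hM : WeightedMaximalInequality μ w p C) (hw : Measurable w)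
    (hp : 0 < p) {g : X → ℝ≥0∞} (hg : Measurable g) {n : ℝ≥0} (hgn : ∀ y, g y ≤ n)
    (x : X) (r : ℝ) :
    ((∫⁻ y in ball x r, g y ∂μ) / μ (ball x r)) ^ p * wMeas μ w (ball x r) ≤
      ENNReal.ofReal C * ∫⁻ y in ball x r, g y ^ p * ENNReal.ofReal (w y) ∂μ := by
  set B := ball x r
  set f : X → ℝ := B.indicator fun y => (g y).toReal
  have hg_top (y : X) : g y ≠ ⊤ := ne_top_of_le_ne_top coe_ne_top (hgn y)
  have hf_nonneg (y : X) : 0 ≤ f y := Set.indicator_nonneg (fun _ _ => toReal_nonneg) y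
  have hf_ofReal (y : X) : ENNReal.ofReal (f y) = B.indicator g y := by
    by_cases hy : y ∈ B <;> simp [f, hy, ofReal_toReal (hg_top y)]
  have hf_mem : MemLp f ⊤ μ := by
    have hf_meas : Measurable f := hg.ennreal_toReal.indicator measurableSet_ball
    refine memLp_top_of_bound hf_meas.aestronglyMeasurable n (ae_of_all _ fun y => ?_)
    rw [Real.norm_eq_abs, abs_of_nonneg (hf_nonneg y), ← ENNReal.ofReal_le_ofReal_iff
      n.coe_nonneg, hf_ofReal, ofReal_coe_nnreal]
    exact (Set.indicator_le_self _ _ y).trans (hgn y)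
  have hf_supp : BoundedSupport f :=
    ⟨x, r, fun y hy => by_contra fun hyB => hy (Set.indicator_of_notMem hyB _)⟩
  have hMnc_ge : ∀ y ∈ B, (∫⁻ z in B, g z ∂μ) / μ B ≤ Mnc μ f y := by
    intro y hy
    have h_int : ∫⁻ z in B, ENNReal.ofReal |f z| ∂μ = ∫⁻ z in B, g z ∂μ :=
      setLIntegral_congr_fun measurableSet_ball fun z hz => by
        rw [abs_of_nonneg (hf_nonneg z), hf_ofReal, Set.indicator_of_mem hz]
    rw [← h_int]
    exact lintegral_ball_div_le_MncE μ _ hy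
  calc ((∫⁻ y in B, g y ∂μ) / μ B) ^ p * wMeas μ w B
      = ∫⁻ y in B, ((∫⁻ z in B, g z ∂μ) / μ B) ^ p * ENNReal.ofReal (w y) ∂μ := by
        rw [wMeas, lintegral_const_mul _ hw.ennreal_ofReal]
    _ ≤ ∫⁻ y in B, Mnc μ f y ^ p * ENNReal.ofReal (w y) ∂μ :=
        setLIntegral_mono' measurableSet_ball fun y hy => by gcongr; exact hMnc_ge y hy
    _ ≤ ∫⁻ y, Mnc μ f y ^ p * ENNReal.ofReal (w y) ∂μ := setLIntegral_le_lintegral _ _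
    _ ≤ ENNReal.ofReal C * ∫⁻ y, ENNReal.ofReal (f y) ^ p * ENNReal.ofReal (w y) ∂μ :=
        hM f hf_mem hf_nonneg hf_supp
    _ = ENNReal.ofReal C * ∫⁻ y in B, g y ^ p * ENNReal.ofReal (w y) ∂μ := by
        rw [← lintegral_indicator measurableSet_ball]
        congr 2 with y
        by_cases hy : y ∈ B <;> simp [B, hf_ofReal, hy, zero_rpow_of_pos hp]

lemma div_mul_rpow_average_le_of_le_dualWeight (hM : WeightedMaximalInequality μ w p C)
    (hw : Measurable w) (hw_pos : ∀ᵐ y ∂μ, 0 < w y) (hp : 1 < p) {x : X} {r : ℝ}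
    (hB0 : μ (ball x r) ≠ 0) (hB : μ (ball x r) ≠ ⊤) {g : X → ℝ≥0∞} (hg : Measurable g)
    {n : ℝ≥0} (hgn : ∀ y, g y ≤ n) (hgσ : ∀ y, g y ≤ dualWeight w p y) :
    wMeas μ w (ball x r) / μ (ball x r) * ((∫⁻ y in ball x r, g y ∂μ) / μ (ball x r)) ^ (p - 1)
      ≤ ENNReal.ofReal C := by
  have h_int_top : ∫⁻ y in ball x r, g y ∂μ ≠ ⊤ :=
    ne_top_of_le_ne_top (by rw [setLIntegral_const]; exact mul_ne_top coe_ne_top hB)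
      (lintegral_mono hgn)
  refine ENNReal.div_mul_rpow_sub_one_le hp h_int_top hB0 hB ?_
  calc _ ≤ ENNReal.ofReal C * ∫⁻ y in ball x r, g y ^ p * ENNReal.ofReal (w y) ∂μ :=
        hM.rpow_average_mul_wMeas_le hw (zero_lt_one.trans hp) hg hgn x r
    _ ≤ ENNReal.ofReal C * ∫⁻ y in ball x r, g y ∂μ := by
        refine mul_le_mul_right (lintegral_mono_ae (ae_restrict_of_ae ?_)) _
        filter_upwards [hw_pos] with y hy
        exact ENNReal.rpow_mul_le_of_le_rpow_one_div_one_sub hp (ofReal_pos.2 hy).ne'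
          ofReal_ne_top (hgσ y)

theorem apWith (hM : WeightedMaximalInequality μ w p C) (hw : Measurable w)
    (hw_pos : ∀ᵐ y ∂μ, 0 < w y) (hp : 1 < p)
    (hball : ∀ (x : X) (r : ℝ), 0 < r → 0 < μ (ball x r) ∧ μ (ball x r) < ⊤) :
    ApWith μ w p C := by
  intro x r hr
  obtain ⟨hB0, hB⟩ := hball x r hr
  set σ := dualWeight w p
  have hσ : Measurable σ := measurable_dualWeight hw p
  have h_trunc (n : ℕ) := hM.div_mul_rpow_average_le_of_le_dualWeight hw hw_pos hp hB0.ne'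
    hB.ne (g := fun y => min (σ y) n) (hσ.min measurable_const) (n := n) (fun y => by simp)
    (fun y => min_le_left _ _)
  have h_sup : ∫⁻ y in ball x r, σ y ∂μ = ⨆ n : ℕ, ∫⁻ y in ball x r, min (σ y) n ∂μ := by
    rw [← lintegral_iSup (fun n => hσ.min measurable_const)
      (fun m n hmn y => min_le_min le_rfl (Nat.cast_le.2 hmn))]
    congr with y
    rw [← inf_iSup_eq, iSup_natCast, inf_top_eq]
  change wMeas μ w (ball x r) / μ (ball x r) * ((∫⁻ y in ball x r, σ y ∂μ) / μ (ball x r))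
    ^ (p - 1) ≤ _
  rw [h_sup, iSup_div, ← orderIsoRpow_apply (p - 1) (sub_pos.2 hp), OrderIso.map_iSup, mul_iSup]
  exact iSup_le h_trunc

end WeightedMaximalInequality

end MaximalInequality

lemma ApWith.nonneg {X : Type*} [MetricSpace X] [MeasurableSpace X] {μ : Measure X}
    {w : X → ℝ} {p C : ℝ} (h : ApWith μ w p C) (hw : Measurable w) (hw_pos : ∀ᵐ y ∂μ, 0 < w y)
    (hp : 1 < p) {x : X} {r : ℝ} (hr : 0 < r) (hB0 : μ (ball x r) ≠ 0)
    (hB : μ (ball x r) ≠ ⊤) : 0 ≤ C := by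
  have hW : 0 < wMeas μ w (ball x r) :=
    setLIntegral_pos_of_ae_pos hw.ennreal_ofReal (hw_pos.mono fun y hy => ofReal_pos.2 hy) hB0
  have hσ : 0 < ∫⁻ y in ball x r, dualWeight w p y ∂μ :=
    setLIntegral_pos_of_ae_pos (measurable_dualWeight hw p) (ae_of_all _ (dualWeight_pos hp w))
      hB0
  have h_lhs := ENNReal.mul_pos (ENNReal.div_pos hW.ne' hB).ne'
    (ENNReal.rpow_pos_of_nonneg (ENNReal.div_pos hσ.ne' hB) (sub_pos.2 hp).le).ne'
  exact (ofReal_pos.1 (h_lhs.trans_le (h x r hr))).le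

/-- If the weighted `L^p` maximal inequality with constant `C₁` holds for all
nonnegative `f ∈ L^∞(X)` with bounded support, then `w ∈ A_p` and `[w]_{A_p} ≤ C₁`. -/
theorem stmt_4 {X : Type*} [MetricSpace X] [MeasurableSpace X] [OpensMeasurableSpace X]
    (μ : Measure X) (c : ℝ) (hX : GoodSpace X μ c)
    (w : X → ℝ) (hw : IsWeight μ w)
    (p : ℝ) (hp : 1 < p) (C₁ : ℝ)
    (hbound : ∀ f : X → ℝ, MemLp f ⊤ μ → (∀ x, 0 ≤ f x) → BoundedSupport f →
      ∫⁻ x, Mnc μ f x ^ p * ENNReal.ofReal (w x) ∂μ ≤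
        ENNReal.ofReal C₁ * ∫⁻ x, ENNReal.ofReal (f x) ^ p * ENNReal.ofReal (w x) ∂μ) :
    MemAp μ w p ∧ ApConst μ w p ≤ C₁ := by
  obtain ⟨hX, -, hball, -, -⟩ := hX
  obtain ⟨hw_meas, hw_pos, -⟩ := hw
  have hAp : ApWith μ w p C₁ :=
    WeightedMaximalInequality.apWith hbound hw_meas hw_pos hp hball
  obtain ⟨x₀, -, -⟩ := hX.exists_pair_ne
  obtain ⟨hB0, hB⟩ := hball x₀ 1 one_pos
  have h_bdd : BddBelow {C : ℝ | ApWith μ w p C} :=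
    ⟨0, fun C hC => hC.nonneg hw_meas hw_pos hp one_pos hB0.ne' hB.ne⟩
  exact ⟨⟨C₁, hAp⟩, csInf_le h_bdd hAp⟩
end
end

section
/- Let (X,d,μ) be a metric measure space with a doubling measure (doubling constant c_μ), let 1 < p < ∞ and let w ∈ A_p with σ = w^{1/(1-p)}. Then for every f ∈ L^p(w dμ) and every x ∈ X, the pointwise estimate M*f(x) ≤ [w]_{A_p}^{1/(p-1)} · ( M^{*,w}( (M^{*,σ}(f σ^{-1}))^{p-1} w^{-1} )(x) )^{1/(p-1)} holds, where M* is the noncentered Hardy–Littlewood maximal function and M^{*,w}, M^{*,σ} are the weighted maximal functions with respect to w and σ. -/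
open MeasureTheory Metric ENNReal

noncomputable section

/-!
Fix a ball `B ∋ x` and put `g = (M^{*,σ}(f σ⁻¹))^(p-1) w⁻¹`. Since `∫_B |f| dμ = ∫_B (|f| σ⁻¹) σ dμ`,
the ratio `∫_B |f| dμ / σ(B)` is at most `M^{*,σ}(f σ⁻¹)(y)` for every `y ∈ B`. Raising this to the
power `p - 1` and integrating over `B` against `μ` gives
`(∫_B |f| dμ / σ(B))^(p-1) μ(B) ≤ ∫_B g w dμ ≤ w(B) M^{*,w} g(x)`, hence
`(⨍_B |f| dμ)^(p-1) ≤ (w(B)/μ(B)) (σ(B)/μ(B))^(p-1) M^{*,w} g(x) ≤ [w]_{A_p} M^{*,w} g(x)`.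
-/

namespace ENNReal

theorem le_ofReal_sInf {s : Set ℝ} (hs : s.Nonempty) {a : ℝ≥0∞}
    (h : ∀ C ∈ s, a ≤ ENNReal.ofReal C) : a ≤ ENNReal.ofReal (sInf s) := by
  refine ENNReal.le_of_forall_pos_le_add fun ε hε _ => ?_
  obtain ⟨C, hC, hlt⟩ := Real.lt_sInf_add_pos hs (NNReal.coe_pos.2 hε)
  calc a ≤ ENNReal.ofReal C := h C hC
    _ ≤ ENNReal.ofReal (sInf s + ε) := ENNReal.ofReal_le_ofReal hlt.le
    _ ≤ ENNReal.ofReal (sInf s) + ε :=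
      ENNReal.ofReal_add_le.trans_eq (by rw [ENNReal.ofReal_coe_nnreal])

/-- The estimate on one ball `B`, read with `m = μ(B)`, `W = w(B)`, `S = σ(B)`,
`N = ∫_B |f| dμ` and `q = p - 1`. -/
theorem div_rpow_le_of_ap {m W S N M K : ℝ≥0∞} {q : ℝ} (hq : 0 < q) (hm0 : m ≠ 0)
    (hm : m ≠ ∞) (hW : W ≠ 0) (hS : S ≠ 0) (hK : K ≠ ∞) (hAp : W / m * (S / m) ^ q ≤ K)
    (hN : (N / S) ^ q * m ≤ M * W) : (N / m) ^ q ≤ K * M := by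
  have hSt : S ≠ ∞ := by
    rintro rfl
    rw [top_div_of_ne_top hm, top_rpow_of_pos hq, mul_top (ENNReal.div_pos hW hm).ne'] at hAp
    exact hK (top_le_iff.1 hAp)
  have hsplit : N / m = S / m * (N / S) :=
    calc N / m = N / S * S / m := by rw [ENNReal.div_mul_cancel hS hSt]
      _ = S / m * (N / S) := by rw [mul_div_assoc, mul_comm]
  have hNS : (N / S) ^ q ≤ M * W / m := (ENNReal.le_div_iff_mul_le (Or.inl hm0) (Or.inl hm)).2 hN
  calc (N / m) ^ q = (S / m) ^ q * (N / S) ^ q := by rw [hsplit, mul_rpow_of_nonneg _ _ hq.le]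
    _ ≤ (S / m) ^ q * (M * W / m) := by gcongr
    _ = W / m * (S / m) ^ q * M := by rw [mul_div_assoc]; ring
    _ ≤ K * M := by gcongr

end ENNReal

theorem setLIntegral_pos_of_ae_pos_s6 {X : Type*} [MeasurableSpace X] {μ : Measure X}
    {g : X → ℝ≥0∞} (hg : AEMeasurable g μ) (hpos : ∀ᵐ y ∂μ, 0 < g y) {s : Set X} (hs : μ s ≠ 0) : 0 < ∫⁻ y in s, g y ∂μ := by
  refine pos_iff_ne_zero.2 fun h0 => hs ?_
  rw [lintegral_eq_zero_iff' hg.restrict] at h0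
  have hfalse : ∀ᵐ _ ∂μ.restrict s, False := by
    filter_upwards [h0, ae_restrict_of_ae hpos] with y h1 h2
    exact h2.ne' h1
  simpa using hfalse

section

variable {X : Type*} [MetricSpace X] [MeasurableSpace X] {μ : Measure X}

theorem MemAp.apWith_apConst {w : X → ℝ} {p : ℝ} (hAp : MemAp μ w p) :
    ApWith μ w p (ApConst μ w p) :=
  fun x r hr => ENNReal.le_ofReal_sInf hAp fun _ hC => hC x r hr

theorem wMeas_pos {w : X → ℝ} (hw : Measurable w) (hpos : ∀ᵐ y ∂μ, 0 < w y) {s : Set X}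
    (hs : μ s ≠ 0) : 0 < wMeas μ w s :=
  setLIntegral_pos_of_ae_pos_s6 hw.ennreal_ofReal.aemeasurable
    (hpos.mono fun _ hy => ENNReal.ofReal_pos.2 hy) hs

theorem wMeas_rpow {w : X → ℝ} (hpos : ∀ᵐ y ∂μ, 0 < w y) (q : ℝ) (s : Set X) :
    wMeas μ (fun y => w y ^ q) s = ∫⁻ y in s, ENNReal.ofReal (w y) ^ q ∂μ :=
  lintegral_congr_ae <| ae_restrict_of_ae <|
    hpos.mono fun _ hy => (ENNReal.ofReal_rpow_of_pos hy).symm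

theorem div_wMeas_le_mncWE (v : X → ℝ) (g : X → ℝ≥0∞) {y z : X} {r : ℝ} (hy : y ∈ ball z r) :
    (∫⁻ t in ball z r, g t * ENNReal.ofReal (v t) ∂μ) / wMeas μ v (ball z r) ≤ MncWE μ v g y :=
  le_iSup₂_of_le z r (le_iSup_of_le hy le_rfl)

end

theorem setLIntegral_div_measure_le_of_memAp {X : Type*} [MetricSpace X] [MeasurableSpace X]
    [OpensMeasurableSpace X] {μ : Measure X} {w : X → ℝ} (hw : IsWeight μ w) {p : ℝ}
    (hp : 1 < p) (hAp : MemAp μ w p) (f : X → ℝ) {x z : X} {r : ℝ} (hxB : x ∈ ball z r) :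
    (∫⁻ y in ball z r, ENNReal.ofReal |f y| ∂μ) / μ (ball z r) ≤
      ENNReal.ofReal (ApConst μ w p) ^ (1 / (p - 1)) *
        (MncWE μ w
            (fun y =>
              MncWE μ (fun t => w t ^ (1 / (1 - p)))
                  (fun t => ENNReal.ofReal |f t| / ENNReal.ofReal (w t ^ (1 / (1 - p)))) y ^
                  (p - 1) *
                (ENNReal.ofReal (w y))⁻¹) x) ^ (1 / (p - 1)) := by
  obtain ⟨hw_meas, hw_pos, hw_int⟩ := hw
  have hq : 0 < p - 1 := sub_pos.2 hp
  have hr : 0 < r := dist_nonneg.trans_lt hxB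
  set σ : X → ℝ := fun t => w t ^ (1 / (1 - p))
  set B := ball z r
  set N := ∫⁻ y in B, ENNReal.ofReal |f y| ∂μ
  set Mσ := MncWE μ σ fun t => ENNReal.ofReal |f t| / ENNReal.ofReal (σ t)
  -- `0 / 0 = 0` and `a / ∞ = 0` in `ℝ≥0∞`, so null balls and balls of infinite measure are trivial.
  rcases eq_or_ne (μ B) 0 with hm0 | hm0
  · simp [N, setLIntegral_measure_zero _ _ hm0]
  rcases eq_or_ne (μ B) ∞ with hm | hm
  · simp [hm]
  have hσ_pos : ∀ᵐ t ∂μ, 0 < σ t := hw_pos.mono fun t ht => Real.rpow_pos_of_pos ht _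
  have hN_le : ∀ y ∈ B, N / wMeas μ σ B ≤ Mσ y := by
    intro y hy
    convert div_wMeas_le_mncWE σ _ hy using 2
    refine lintegral_congr_ae (ae_restrict_of_ae (hσ_pos.mono fun t ht => ?_))
    exact (ENNReal.div_mul_cancel (ENNReal.ofReal_pos.2 ht).ne' ENNReal.ofReal_ne_top).symm
  have hN : (N / wMeas μ σ B) ^ (p - 1) * μ B ≤
      MncWE μ w (fun y => Mσ y ^ (p - 1) * (ENNReal.ofReal (w y))⁻¹) x * wMeas μ w B := by
    calc (N / wMeas μ σ B) ^ (p - 1) * μ B = ∫⁻ _ in B, (N / wMeas μ σ B) ^ (p - 1) ∂μ :=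
          (setLIntegral_const _ _).symm
      _ ≤ ∫⁻ y in B, Mσ y ^ (p - 1) ∂μ :=
          setLIntegral_mono' measurableSet_ball fun y hy => rpow_le_rpow (hN_le y hy) hq.le
      _ = ∫⁻ y in B, Mσ y ^ (p - 1) * (ENNReal.ofReal (w y))⁻¹ * ENNReal.ofReal (w y) ∂μ := by
          refine lintegral_congr_ae (ae_restrict_of_ae (hw_pos.mono fun y hy => ?_))
          exact (ENNReal.inv_mul_cancel_right (ENNReal.ofReal_pos.2 hy).ne'
            ENNReal.ofReal_ne_top).symm
      _ ≤ _ := (ENNReal.div_le_iff_le_mul (Or.inl (wMeas_pos hw_meas hw_pos hm0).ne')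
          (Or.inl (hw_int z r hr).lintegral_lt_top.ne)).1 (div_wMeas_le_mncWE w _ hxB)
  have hAp_B := hAp.apWith_apConst z r hr
  rw [← wMeas_rpow hw_pos] at hAp_B
  rw [← mul_rpow_of_nonneg _ _ (by positivity), one_div, ENNReal.le_rpow_inv_iff hq]
  exact div_rpow_le_of_ap hq hm0 hm (wMeas_pos hw_meas hw_pos hm0).ne'
    (wMeas_pos (hw_meas.pow_const _) hσ_pos hm0).ne' ENNReal.ofReal_ne_top hAp_B hN

theorem stmt_6_general {X : Type*} [MetricSpace X] [MeasurableSpace X] [OpensMeasurableSpace X]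
    (μ : Measure X)
    (w : X → ℝ) (hw : IsWeight μ w)
    (p : ℝ) (hp : 1 < p) (hAp : MemAp μ w p)
    (σ : X → ℝ) (hσ : σ = fun y => w y ^ (1 / (1 - p)))
    (f : X → ℝ) (x : X) :
    Mnc μ f x ≤
      ENNReal.ofReal (ApConst μ w p) ^ (1 / (p - 1)) *
        (MncWE μ w
            (fun y =>
              MncWE μ σ (fun z => ENNReal.ofReal |f z| / ENNReal.ofReal (σ z)) y ^ (p - 1) *
                (ENNReal.ofReal (w y))⁻¹) x) ^ (1 / (p - 1)) := by
  subst hσ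
  exact iSup₂_le fun z r => iSup_le fun hxB =>
    setLIntegral_div_measure_le_of_memAp hw hp hAp f hxB

/-- Pointwise estimate: if `w ∈ A_p` and `σ = w^(1/(1-p))`, then for every
`f ∈ L^p(w dμ)` and every `x ∈ X`,
`M*f(x) ≤ [w]_{A_p}^(1/(p-1)) (M^{*,w}((M^{*,σ}(f σ⁻¹))^(p-1) w⁻¹)(x))^(1/(p-1))`. -/
theorem stmt_6 {X : Type*} [MetricSpace X] [MeasurableSpace X] [OpensMeasurableSpace X]
    (μ : Measure X) (c : ℝ) (hX : GoodSpace X μ c)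
    (w : X → ℝ) (hw : IsWeight μ w)
    (p : ℝ) (hp : 1 < p) (hAp : MemAp μ w p)
    (σ : X → ℝ) (hσ : σ = fun y => w y ^ (1 / (1 - p)))
    (f : X → ℝ) (hf : MemLpW μ w p f) (x : X) :
    Mnc μ f x ≤
      ENNReal.ofReal (ApConst μ w p) ^ (1 / (p - 1)) *
        (MncWE μ w
            (fun y =>
              MncWE μ σ (fun z => ENNReal.ofReal |f z| / ENNReal.ofReal (σ z)) y ^ (p - 1) *
                (ENNReal.ofReal (w y))⁻¹) x) ^ (1 / (p - 1)) :=
  stmt_6_general μ w hw p hp hAp σ hσ f x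
end
end

section
/- Let (X,d,μ) be a metric measure space with a doubling measure (doubling constant c_μ), let f ∈ L^∞(X) be nonnegative with bounded support, let t > 0 be such that E_t = {x ∈ X : M*f(x) > t} ≠ X, and let f_t be the Calderón–Zygmund-type replacement of f at level t built from a Whitney cover of E_t. Then M*f(x) ≤ C(c_μ)·M*f_t(x) for every x ∈ X \ E_t, where C(c_μ) depends only on the doubling constant and M* is the noncentered Hardy–Littlewood maximal function. -/
open MeasureTheory Metric ENNReal

noncomputable section

/-!
Fix a ball `B ∋ x` with `x ∉ E_t`. On `B \ E_t` we have `f_t = f`. The part `B ∩ E_t` is covered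
by the Whitney balls `B_i` meeting `B`; since `x ∉ E_t`, each has radius at most `dist(x_i, x)/8`,
so it lies in `2B`. On `B_i` the function `f_t` dominates `⨍_{B_i} f`, hence
`∫_{B_i} f = μ(B_i) ⨍_{B_i} f ≤ ∫_{B_i} f_t`, and bounded overlap of the `B_i` gives
`∫_B f ≤ (N + 1) ∫_{2B} f_t`. Doubling turns this into
`⨍_B f ≤ (N + 1) c_μ ⨍_{2B} f_t ≤ (N + 1) c_μ M* f_t(x)`.
-/

theorem Metric.ball_subset_ball_two_mul_of_five_mul_le_dist {X : Type*} [PseudoMetricSpace X]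
    {c x z : X} {ρ r : ℝ} (hρ : 5 * ρ ≤ dist c x) (hx : x ∈ ball z r)
    (hmeet : (ball c ρ ∩ ball z r).Nonempty) : ball c ρ ⊆ ball z (2 * r) := by
  obtain ⟨y, hyc, hyz⟩ := hmeet
  intro w hw
  rw [mem_ball] at hx hyc hyz hw ⊢
  have hcx := dist_triangle4 c y z x
  have hwz := dist_triangle4 w c y z
  rw [dist_comm c y, dist_comm z x] at hcx
  rw [dist_comm c y] at hwz
  linarith

section Averages

variable {α : Type*} [MeasurableSpace α] {μ : Measure α} {s : Set α} {f : α → ℝ}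

theorem MeasureTheory.setAverage_le_lpNorm_top (hf : MemLp f ∞ μ) :
    ⨍ x in s, f x ∂μ ≤ lpNorm f ∞ μ := by
  rw [setAverage_eq, smul_eq_mul]
  rcases eq_or_ne (μ.real s) 0 with hs | hs
  · simp [hs, lpNorm_nonneg]
  have hs_pos : 0 < μ.real s := lt_of_le_of_ne measureReal_nonneg hs.symm
  rw [inv_mul_le_iff₀ hs_pos]
  calc ∫ x in s, f x ∂μ ≤ ‖∫ x in s, f x ∂μ‖ := Real.le_norm_self _
    _ ≤ lpNorm f ∞ μ * μ.real s :=
      norm_setIntegral_le_of_norm_le_const_ae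
        (ENNReal.toReal_ne_zero.1 hs).2.lt_top (ae_restrict_of_ae (ae_le_lpNorm_exponent_top hf))
    _ = μ.real s * lpNorm f ∞ μ := mul_comm _ _

theorem MeasureTheory.setAverage_le_sSup_setAverage {ι : Type*} {B : ι → Set α}
    (hf : MemLp f ∞ μ) {i : ι} {y : α} (hy : y ∈ B i) :
    ⨍ x in B i, f x ∂μ ≤ sSup {a : ℝ | ∃ j, y ∈ B j ∧ a = ⨍ x in B j, f x ∂μ} := by
  refine le_csSup ⟨lpNorm f ∞ μ, ?_⟩ ⟨i, hy, rfl⟩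
  rintro a ⟨j, -, rfl⟩
  exact setAverage_le_lpNorm_top hf

theorem MeasureTheory.setLIntegral_ofReal_le_of_setAverage_le {g : α → ℝ} (hs : MeasurableSet s)
    (hμs : μ s ≠ ∞) (hf : IntegrableOn f s μ) (hf₀ : 0 ≤ᵐ[μ.restrict s] f)
    (hfg : ∀ y ∈ s, ⨍ x in s, f x ∂μ ≤ g y) :
    ∫⁻ y in s, ENNReal.ofReal (f y) ∂μ ≤ ∫⁻ y in s, ENNReal.ofReal (g y) ∂μ :=
  calc ∫⁻ y in s, ENNReal.ofReal (f y) ∂μ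
      = μ s * ENNReal.ofReal (⨍ x in s, f x ∂μ) := by
        rw [ofReal_setAverage hf hf₀, ← setLAverage_eq, measure_mul_setLAverage _ hμs]
    _ = ∫⁻ _ in s, ENNReal.ofReal (⨍ x in s, f x ∂μ) ∂μ := by rw [setLIntegral_const, mul_comm]
    _ ≤ ∫⁻ y in s, ENNReal.ofReal (g y) ∂μ :=
        setLIntegral_mono' hs fun y hy => ENNReal.ofReal_le_ofReal (hfg y hy)

theorem MeasureTheory.setLIntegral_ofReal_abs_le_of_eq_sSup_setAverage {ι : Type*}
    {B : ι → Set α} {g : α → ℝ} {i : ι} (hB : MeasurableSet (B i)) (hμB : μ (B i) ≠ ∞)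
    (hf : MemLp f ∞ μ) (hf₀ : ∀ x, 0 ≤ f x)
    (hg : ∀ y ∈ B i, g y = sSup {a : ℝ | ∃ j, y ∈ B j ∧ a = ⨍ x in B j, f x ∂μ}) :
    ∫⁻ y in B i, ENNReal.ofReal |f y| ∂μ ≤ ∫⁻ y in B i, ENNReal.ofReal |g y| ∂μ := by
  have := isFiniteMeasure_restrict.2 hμB
  simp only [abs_of_nonneg (hf₀ _)]
  refine setLIntegral_ofReal_le_of_setAverage_le hB hμB ((hf.restrict _).integrable le_top)
    (ae_of_all _ hf₀) fun y hy => ?_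
  rw [hg y hy]
  exact (setAverage_le_sSup_setAverage hf hy).trans (le_abs_self _)

end Averages

section Overlap

variable {α : Type*} [MeasurableSpace α] {μ : Measure α}

theorem MeasureTheory.Measure.sum_restrict_le_smul_restrict {ι : Type*} [Countable ι]
    {s : ι → Set α} {S : Set α} {N : ℝ≥0∞} (hs : ∀ i, MeasurableSet (s i)) (hS : MeasurableSet S)
    (hsS : ∀ i, s i ⊆ S) (hN : ∀ y, ∑' i, (s i).indicator (fun _ => (1 : ℝ≥0∞)) y ≤ N) :
    Measure.sum (fun i => μ.restrict (s i)) ≤ N • μ.restrict S := by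
  refine Measure.le_iff.mpr fun t ht => ?_
  have hpointwise : ∀ y, ∑' i, (t ∩ s i).indicator (fun _ => (1 : ℝ≥0∞)) y ≤
      N * (t ∩ S).indicator (fun _ => 1) y := by
    intro y
    by_cases hy : y ∈ t ∩ S
    · rw [Set.indicator_of_mem hy, mul_one]
      exact (ENNReal.tsum_le_tsum fun i => Set.indicator_le_indicator_of_subset
        Set.inter_subset_right (fun _ => zero_le_one) y).trans (hN y)
    · have hzero : ∀ i, (t ∩ s i).indicator (fun _ => (1 : ℝ≥0∞)) y = 0 := fun i =>
        Set.indicator_of_notMem (fun hyi => hy ⟨hyi.1, hsS i hyi.2⟩) _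
      simp only [hzero, tsum_zero, zero_le]
  calc (Measure.sum fun i => μ.restrict (s i)) t
      = ∫⁻ y, ∑' i, (t ∩ s i).indicator (fun _ => 1) y ∂μ := by
        rw [Measure.sum_apply _ ht, lintegral_tsum fun i =>
          (measurable_const.indicator (ht.inter (hs i))).aemeasurable]
        simp only [Measure.restrict_apply ht, lintegral_indicator_const (ht.inter (hs _)), one_mul]
    _ ≤ ∫⁻ y, N * (t ∩ S).indicator (fun _ => 1) y ∂μ := lintegral_mono hpointwise
    _ = (N • μ.restrict S) t := by
        rw [lintegral_const_mul _ (measurable_const.indicator (ht.inter hS)),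
          lintegral_indicator_const (ht.inter hS), one_mul, Measure.smul_apply,
          Measure.restrict_apply ht, smul_eq_mul]

theorem MeasureTheory.tsum_setLIntegral_le_of_tsum_indicator_le {ι : Type*} [Countable ι]
    {s : ι → Set α} {S : Set α} {N : ℝ≥0∞} (hs : ∀ i, MeasurableSet (s i)) (hS : MeasurableSet S)
    (hsS : ∀ i, s i ⊆ S) (hN : ∀ y, ∑' i, (s i).indicator (fun _ => (1 : ℝ≥0∞)) y ≤ N)
    (g : α → ℝ≥0∞) : ∑' i, ∫⁻ y in s i, g y ∂μ ≤ N * ∫⁻ y in S, g y ∂μ :=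
  calc ∑' i, ∫⁻ y in s i, g y ∂μ = ∫⁻ y, g y ∂Measure.sum (fun i => μ.restrict (s i)) :=
        (lintegral_sum_measure g _).symm
    _ ≤ ∫⁻ y, g y ∂(N • μ.restrict S) :=
        lintegral_mono' (Measure.sum_restrict_le_smul_restrict hs hS hsS hN) le_rfl
    _ = N * ∫⁻ y in S, g y ∂μ := lintegral_smul_measure _ _

end Overlap

theorem MeasureTheory.setLIntegral_ball_le_of_whitney_cover {X : Type*} [MetricSpace X]
    [MeasurableSpace X] [OpensMeasurableSpace X] {μ : Measure X} {ι : Type*} [Countable ι]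
    {xc : ι → X} {rad : ι → ℝ} {E : Set X} {N : ℝ≥0∞} {F G : X → ℝ≥0∞} {x z : X} {r : ℝ}
    (hE : E = ⋃ i, ball (xc i) (rad i))
    (hN : ∀ y, ∑' i, (ball (xc i) (rad i)).indicator (fun _ => (1 : ℝ≥0∞)) y ≤ N)
    (hfar : ∀ i, 5 * rad i ≤ dist (xc i) x) (hFG : ∀ y ∉ E, F y = G y)
    (hloc : ∀ i, ∫⁻ y in ball (xc i) (rad i), F y ∂μ ≤ ∫⁻ y in ball (xc i) (rad i), G y ∂μ)
    (hx : x ∈ ball z r) :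
    ∫⁻ y in ball z r, F y ∂μ ≤ (N + 1) * ∫⁻ y in ball z (2 * r), G y ∂μ := by
  have hEm : MeasurableSet E := hE ▸ MeasurableSet.iUnion fun i => measurableSet_ball
  have hr : ball z r ⊆ ball z (2 * r) :=
    ball_subset_ball (by linarith [(dist_nonneg.trans_lt hx : (0 : ℝ) < r)])
  let I : Set ι := {i | (ball (xc i) (rad i) ∩ ball z r).Nonempty}
  have hcoverI : ball z r ∩ E ⊆ ⋃ i : I, ball (xc i) (rad i) := by
    rintro y ⟨hyB, hyE⟩
    obtain ⟨i, hi⟩ := Set.mem_iUnion.mp (hE ▸ hyE)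
    exact Set.mem_iUnion.mpr ⟨⟨i, ⟨y, hi, hyB⟩⟩, hi⟩
  have hinside : ∫⁻ y in ball z r ∩ E, F y ∂μ ≤ N * ∫⁻ y in ball z (2 * r), G y ∂μ :=
    calc ∫⁻ y in ball z r ∩ E, F y ∂μ
        ≤ ∑' i : I, ∫⁻ y in ball (xc i) (rad i), F y ∂μ :=
          (lintegral_mono_set hcoverI).trans (lintegral_iUnion_le _ _)
      _ ≤ ∑' i : I, ∫⁻ y in ball (xc i) (rad i), G y ∂μ := ENNReal.tsum_le_tsum fun i => hloc i
      _ ≤ N * ∫⁻ y in ball z (2 * r), G y ∂μ :=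
          tsum_setLIntegral_le_of_tsum_indicator_le (s := fun i : I => ball (xc i) (rad i))
            (fun _ => measurableSet_ball) measurableSet_ball
            (fun i => ball_subset_ball_two_mul_of_five_mul_le_dist (hfar i) hx i.2)
            (fun y => (ENNReal.tsum_comp_le_tsum_of_injective Subtype.val_injective _).trans (hN y))
            G
  have houtside : ∫⁻ y in ball z r \ E, F y ∂μ ≤ ∫⁻ y in ball z (2 * r), G y ∂μ :=
    calc ∫⁻ y in ball z r \ E, F y ∂μ = ∫⁻ y in ball z r \ E, G y ∂μ :=
          setLIntegral_congr_fun (measurableSet_ball.diff hEm) fun y hy => hFG y hy.2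
      _ ≤ ∫⁻ y in ball z (2 * r), G y ∂μ := lintegral_mono_set (Set.sdiff_subset.trans hr)
  calc ∫⁻ y in ball z r, F y ∂μ
      = ∫⁻ y in ball z r ∩ E, F y ∂μ + ∫⁻ y in ball z r \ E, F y ∂μ :=
        (lintegral_inter_add_sdiff _ _ hEm).symm
    _ ≤ N * ∫⁻ y in ball z (2 * r), G y ∂μ + ∫⁻ y in ball z (2 * r), G y ∂μ :=
        add_le_add hinside houtside
    _ = (N + 1) * ∫⁻ y in ball z (2 * r), G y ∂μ := by rw [add_mul, one_mul]

theorem ENNReal.div_le_mul_div_of_le_mul {a b d k : ℝ≥0∞} (hk₀ : k ≠ 0) (hk : k ≠ ∞)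
    (hd : d ≤ k * b) : a / b ≤ k * (a / d) :=
  calc a / b = k * a / (k * b) := (ENNReal.mul_div_mul_left _ _ hk₀ hk).symm
    _ ≤ k * a / d := ENNReal.div_le_div_left hd _
    _ = k * (a / d) := mul_div_assoc _ _ _

theorem lintegral_ball_two_mul_div_le_MncE {X : Type*} [MetricSpace X] [MeasurableSpace X]
    {μ : Measure X} {c : ℝ} (hc : 0 < c) (g : X → ℝ≥0∞) {x z : X} {r : ℝ}
    (hdoubling : μ (ball z (2 * r)) ≤ ENNReal.ofReal c * μ (ball z r)) (hx : x ∈ ball z r) :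
    (∫⁻ y in ball z (2 * r), g y ∂μ) / μ (ball z r) ≤ ENNReal.ofReal c * MncE μ g x := by
  have hx₂ : x ∈ ball z (2 * r) :=
    ball_subset_ball (by linarith [(dist_nonneg.trans_lt hx : (0 : ℝ) < r)]) hx
  refine (ENNReal.div_le_mul_div_of_le_mul (ENNReal.ofReal_pos.2 hc).ne' ENNReal.ofReal_ne_top
    hdoubling).trans ?_
  gcongr
  exact le_iSup₂_of_le z (2 * r) (le_iSup_of_le hx₂ le_rfl)

/-- With `E_t = {M*f > t} ≠ X` and `f_t` the Calderón–Zygmund-type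
replacement of `f` at level `t` built from a Whitney cover of `E_t` (with overlap constant
`N`), one has `M*f(x) ≤ C M*f_t(x)` for every `x ∈ X \ E_t`, where `C` depends only on the
doubling constant `c_μ` (and the Whitney overlap constant `N = N(c_μ)`). -/
theorem stmt_10 (c : ℝ) (hc : 1 < c) (N : ℕ) :
    ∃ C : ℝ, 0 < C ∧
      ∀ (X : Type*) [MetricSpace X] [MeasurableSpace X] [OpensMeasurableSpace X]
        (μ : Measure X), GoodSpace X μ c →
        ∀ f : X → ℝ, MemLp f ⊤ μ → (∀ x, 0 ≤ f x) → BoundedSupport f →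
        ∀ t : ℝ, 0 < t →
        ∀ E : Set X, E = {x | ENNReal.ofReal t < Mnc μ f x} → E ≠ Set.univ →
        ∀ (xc : ℕ → X) (rad : ℕ → ℝ),
          (∀ i, rad i = infDist (xc i) Eᶜ / 8) →
          (∀ i, ball (xc i) (rad i) ⊆ E) →
          E = (⋃ i, ball (xc i) (rad i)) →
          (∀ x, (∑' i, (ball (xc i) (rad i)).indicator (fun _ => (1 : ℝ≥0∞)) x) ≤ N) →
        ∀ ft : X → ℝ,
          (∀ x ∉ E, ft x = f x) →
          (∀ x ∈ E, ft x = sSup {a : ℝ | ∃ i, x ∈ ball (xc i) (rad i) ∧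
              a = ⨍ y in ball (xc i) (rad i), f y ∂μ}) →
        ∀ x ∉ E, Mnc μ f x ≤ ENNReal.ofReal C * Mnc μ ft x := by
  refine ⟨(N + 1) * c, by positivity, ?_⟩
  rintro X _ _ _ μ ⟨-, -, hballs, -, hdoubling⟩ f hf hf₀ - _ - E - - xc rad hrad hsub hcover hN
    ft hft_out hft_in x hx
  have hfin : ∀ y ρ, μ (ball y ρ) ≠ ∞ := fun y ρ => by
    rcases le_or_gt ρ 0 with hρ | hρ
    · simp [ball_eq_empty.mpr hρ]
    · exact (hballs y ρ hρ).2.ne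
  have hfar : ∀ i, 5 * rad i ≤ dist (xc i) x := fun i => by
    have := infDist_le_dist_of_mem (x := xc i) (show x ∈ Eᶜ from hx)
    have := infDist_nonneg (x := xc i) (s := Eᶜ)
    rw [hrad i]; linarith
  have hloc : ∀ i, ∫⁻ y in ball (xc i) (rad i), ENNReal.ofReal |f y| ∂μ ≤
      ∫⁻ y in ball (xc i) (rad i), ENNReal.ofReal |ft y| ∂μ := fun i =>
    setLIntegral_ofReal_abs_le_of_eq_sSup_setAverage (B := fun j => ball (xc j) (rad j))
      measurableSet_ball (hfin _ _) hf hf₀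
      fun y hy => hft_in y (hsub i hy)
  refine iSup₂_le fun z r => iSup_le fun hxB => ?_
  calc (∫⁻ y in ball z r, ENNReal.ofReal |f y| ∂μ) / μ (ball z r)
      ≤ ((N + 1) * ∫⁻ y in ball z (2 * r), ENNReal.ofReal |ft y| ∂μ) / μ (ball z r) :=
        ENNReal.div_le_div_right (setLIntegral_ball_le_of_whitney_cover hcover hN hfar
          (fun y hy => by rw [hft_out y hy]) hloc hxB) _
    _ ≤ (N + 1) * (ENNReal.ofReal c * Mnc μ ft x) := by
        rw [mul_div_assoc]
        gcongr
        exact lintegral_ball_two_mul_div_le_MncE (by linarith) _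
          (hdoubling z r (pos_of_mem_ball hxB)) hxB
    _ = ENNReal.ofReal ((N + 1) * c) * Mnc μ ft x := by
        rw [ENNReal.ofReal_mul (by positivity), ← mul_assoc]
        norm_cast
end
end
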